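/- Poincaré inequality for the anisotropic magnetic gradient (Proposition 2.12, test-function form). Let d ≥ 3, 2 ≤ n ≤ d, R > 0, 0 < λ ≤ Λ. Let M : B_R → ℝ^{d×d} have bounded measurable entries with M(z) invertible for all z and λ|ξ|² ≤ (MᵀM)(z)ξ·conj(ξ) ≤ Λ|ξ|² for all ξ ∈ ℂ^d. Let a ∈ L^∞(B'_R × S^{n−1}, ℝ^d) satisfy the transversality condition, admit the representation ā, and assume c_{n,a,M} > 0; let b ∈ L^d(B_R, ℝ^d) and A(z) := |y|^{−1}a(x, y/|y|) + b(z). Then there exists a constant C > 0, depending only on n, d, λ, Λ, R, ‖a‖_{L^∞}, ‖b‖_{L^d(B_R)} and c_{n,a,M}, such that ∫_{B_R} |v|² dz ≤ C ∫_{B_R} |iM∇v + Av|² dz for every smooth compactly supported v : ℝ^d → ℂ with supp v ⊂ B_R (the right-hand side possibly being +∞). -/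

import Mathlib

open MeasureTheory Complex Metric Finset Matrix

noncomputable section

abbrev ES (k : ℕ) : Type := EuclideanSpace ℝ (Fin k)
abbrev Idx (m n : ℕ) : Type := Fin m ⊕ Fin n
abbrev Pt (m n : ℕ) : Type := EuclideanSpace ℝ (Idx m n)

/-- view a plain function as an element of Euclidean space -/
def mkE {k : ℕ} (v : Fin k → ℝ) : ES k := WithLp.toLp 2 v

def mkP {m n : ℕ} (v : Idx m n → ℝ) : Pt m n := WithLp.toLp 2 v

/-- the first `m` coordinates of a point of `ℝ^{m+n}` -/
def xp {m n : ℕ} (z : Pt m n) : ES m := mkE fun i => z (Sum.inl i)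

/-- the last `n` coordinates of a point of `ℝ^{m+n}` -/
def yp {m n : ℕ} (z : Pt m n) : ES n := mkE fun j => z (Sum.inr j)

/-- assemble a point of `ℝ^{m+n}` from its two blocks -/
def pt {m n : ℕ} (x : ES m) (y : ES n) : Pt m n :=
  mkP (Sum.elim (fun i => x i) (fun j => y j))

/-- normalization `y/|y|` -/
def unitv {k : ℕ} (y : ES k) : ES k := ‖y‖⁻¹ • y

/-- vector of partial derivatives of a complex-valued function -/
def grad {ι : Type} [Fintype ι] [DecidableEq ι]
    (u : EuclideanSpace ℝ ι → ℂ) (z : EuclideanSpace ℝ ι) (i : ι) : ℂ :=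
  fderiv ℝ u z (EuclideanSpace.single i 1)

/-- vector of partial derivatives of a real-valued function -/
def gradR {ι : Type} [Fintype ι] [DecidableEq ι]
    (f : EuclideanSpace ℝ ι → ℝ) (z : EuclideanSpace ℝ ι) (i : ι) : ℝ :=
  fderiv ℝ f z (EuclideanSpace.single i 1)

/-- squared hermitian norm `|v|²` of a complex vector -/
def hsum {ι : Type} [Fintype ι] (v : ι → ℂ) : ℝ := ∑ i, Complex.normSq (v i)

/-- hermitian dot product `v ⋅ conj w` -/
def hdot {ι : Type} [Fintype ι] (v w : ι → ℂ) : ℂ := ∑ i, v i * (starRingEnd ℂ) (w i)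

/-- a real matrix acting on a complex vector -/
def rmap {ι : Type} [Fintype ι] (M : Matrix ι ι ℝ) (v : ι → ℂ) (i : ι) : ℂ :=
  ∑ j, (M i j : ℂ) * v j

/-- squared euclidean norm of a real vector -/
def rnSq {ι : Type} [Fintype ι] (v : ι → ℝ) : ℝ := ∑ i, (v i) ^ 2

/-- uniform ellipticity `λ|ξ|² ≤ Nξ·conj ξ ≤ Λ|ξ|²` for all complex vectors -/
def IsElliptic {ι : Type} [Fintype ι] (lam Lam : ℝ) (N : Matrix ι ι ℝ) : Prop :=
  ∀ ξ : ι → ℂ, lam * hsum ξ ≤ (hdot (fun i => rmap N ξ i) ξ).re ∧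
    (hdot (fun i => rmap N ξ i) ξ).re ≤ Lam * hsum ξ

/-- the annulus `1 < |y| < 2` -/
def annulus (k : ℕ) : Set (ES k) := {y | 1 < ‖y‖ ∧ ‖y‖ < 2}

/-- `|i∇w + |y|⁻¹ p(y/|y|) w|² + |y|⁻² h(y/|y|) |w|²` -/
def mgDensity {k : ℕ} (p : ES k → ES k) (h : ES k → ℝ) (w : ES k → ℂ) (y : ES k) : ℝ :=
  hsum (fun j => Complex.I * grad w y j + ((‖y‖⁻¹ * p (unitv y) j : ℝ) : ℂ) * w y) +
    ‖y‖⁻¹ ^ 2 * h (unitv y) * Complex.normSq (w y)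

/-- the first magnetic eigenvalue `μ₁(p,h)`, as an infimum of Rayleigh quotients over
smooth 0-homogeneous functions -/
def mu1 (k : ℕ) (p : ES k → ES k) (h : ES k → ℝ) : ℝ :=
  sInf { t : ℝ | ∃ w : ES k → ℂ,
    (∀ y : ES k, y ≠ 0 → ContDiffAt ℝ (⊤ : ℕ∞) w y) ∧
    (∀ (c : ℝ) (y : ES k), 0 < c → w (c • y) = w y) ∧
    (∃ y : ES k, y ≠ 0 ∧ w y ≠ 0) ∧
    t = (∫ y in annulus k, mgDensity p h w y) /
        (∫ y in annulus k, ‖y‖⁻¹ ^ 2 * Complex.normSq (w y)) }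

/-- the singular set `Σ₀ = {y = 0}` -/
def Sigma0 (m n : ℕ) : Set (Pt m n) := {z | yp z = 0}

/-- `N = MᵀM` -/
def Nmat {m n : ℕ} (M : Pt m n → Matrix (Idx m n) (Idx m n) ℝ) (z : Pt m n) :
    Matrix (Idx m n) (Idx m n) ℝ := (M z)ᵀ * M z

/-- lower-right `n×n` block of `N` -/
def N3 {m n : ℕ} (M : Pt m n → Matrix (Idx m n) (Idx m n) ℝ) (z : Pt m n) :
    Matrix (Fin n) (Fin n) ℝ := (Nmat M z).submatrix Sum.inr Sum.inr

/-- the magnetic potential `A(z) = |y|⁻¹ a(x, y/|y|) + b(z)` -/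
def Apot {m n : ℕ} (a : ES m → ES n → Idx m n → ℝ) (b : Pt m n → Idx m n → ℝ)
    (z : Pt m n) (i : Idx m n) : ℝ :=
  ‖yp z‖⁻¹ * a (xp z) (unitv (yp z)) i + b z i

/-- the covariant (anisotropic magnetic) gradient `iM∇u + Au` -/
def magGrad {m n : ℕ} (M : Pt m n → Matrix (Idx m n) (Idx m n) ℝ)
    (A : Pt m n → Idx m n → ℝ) (u : Pt m n → ℂ) (z : Pt m n) (i : Idx m n) : ℂ :=
  Complex.I * rmap (M z) (grad u z) i + (A z i : ℂ) * u z

/-- last `n` components, as an element of `ℝⁿ` -/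
def lastE {m n : ℕ} (v : Idx m n → ℝ) : ES n := mkE fun j => v (Sum.inr j)

/-- `ã(x,θ) = |N₃^{1/2}θ|⁻¹ N^{1/2} M⁻¹ a(x, N₃^{1/2}θ/|N₃^{1/2}θ|)`, expressed in terms of
given square roots `S` of `N(x,0)` and `S3` of `N₃(x,0)` -/
def atil {m n : ℕ} (S : Matrix (Idx m n) (Idx m n) ℝ) (S3 : Matrix (Fin n) (Fin n) ℝ)
    (Minv : Matrix (Idx m n) (Idx m n) ℝ) (ax : ES n → Idx m n → ℝ)
    (θ : ES n) : Idx m n → ℝ :=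
  ‖mkE (S3.mulVec fun k => θ k)‖⁻¹ •
    S.mulVec (Minv.mulVec (ax (unitv (mkE (S3.mulVec fun k => θ k)))))

/-- `γ₁(M,a) ≥ g`, formulated through the (unique) positive-definite square roots -/
def gammaLB {m n : ℕ} (M : Pt m n → Matrix (Idx m n) (Idx m n) ℝ)
    (a : ES m → ES n → Idx m n → ℝ) (R g : ℝ) : Prop :=
  ∀ x : ES m, ‖x‖ < R →
    ∀ S : Matrix (Idx m n) (Idx m n) ℝ, ∀ S3 : Matrix (Fin n) (Fin n) ℝ,
      S.PosDef → S3.PosDef → S * S = Nmat M (pt x 0) → S3 * S3 = N3 M (pt x 0) →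
      g ≤ -((n : ℝ) - 2) / 2 + Real.sqrt ((((n : ℝ) - 2) / 2) ^ 2 +
        mu1 n (fun θ => lastE (atil S S3 (M (pt x 0))⁻¹ (a x) θ))
          (fun θ => ∑ i : Fin m, (atil S S3 (M (pt x 0))⁻¹ (a x) θ (Sum.inl i)) ^ 2))

/-- the representation `ā` exists and the Hardy constant `c_{n,a,M}` is positive -/
def HardyConstPos {m n : ℕ} (M : Pt m n → Matrix (Idx m n) (Idx m n) ℝ)
    (a : ES m → ES n → Idx m n → ℝ) (R lam : ℝ) : Prop :=
  ∃ abar : ES m → ES n → Idx m n → ℝ,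
    (∀ z ∈ ball (0 : Pt m n) R, yp z ≠ 0 →
      (M z)⁻¹.mulVec (fun i => a (xp z) (unitv (yp z)) i) = abar (xp z) (unitv (yp z))) ∧
    0 < lam * ((((n : ℝ) - 2) / 2) ^ 2 +
      sInf {t : ℝ | ∃ x : ES m, ‖x‖ < R ∧ t = mu1 n (fun θ => lastE (abar x θ)) 0})

/-- anisotropic transversality condition `M⁻¹a(x,y/|y|) ⋅ (0,y) = 0` -/
def Transversal {m n : ℕ} (M : Pt m n → Matrix (Idx m n) (Idx m n) ℝ)
    (a : ES m → ES n → Idx m n → ℝ) (R : ℝ) : Prop :=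
  ∀ z ∈ ball (0 : Pt m n) R, yp z ≠ 0 →
    ∑ j, (M z)⁻¹.mulVec (fun i => a (xp z) (unitv (yp z)) i) (Sum.inr j) * yp z j = 0

/-- weak solution of `(iM∇ + A)²u = 0` in `B_R` -/
def WeakSol {m n : ℕ} (R : ℝ) (M : Pt m n → Matrix (Idx m n) (Idx m n) ℝ)
    (A : Pt m n → Idx m n → ℝ) (u : Pt m n → ℂ) : Prop :=
  ContinuousOn u (ball 0 R) ∧
  ContDiffOn ℝ 1 u (ball 0 R \ Sigma0 m n) ∧
  IntegrableOn (fun z => hsum (grad u z) + Complex.normSq (u z) / ‖yp z‖ ^ 2)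
    (ball (0 : Pt m n) R) ∧
  ∀ φ : Pt m n → ℂ, ContDiff ℝ (⊤ : ℕ∞) φ → HasCompactSupport φ →
    tsupport φ ⊆ ball 0 R \ Sigma0 m n →
    ∫ z in ball (0 : Pt m n) R,
      hdot (fun i => magGrad M A u z i) (fun i => magGrad M A φ z i) = 0

/-- block-vanishing condition `N₂(x,0) = 0` -/
def BlockZero {m n : ℕ} (M : Pt m n → Matrix (Idx m n) (Idx m n) ℝ) (R : ℝ) : Prop :=
  ∀ x : ES m, (pt x 0 : Pt m n) ∈ ball 0 R →
    ∀ (i : Fin m) (j : Fin n), Nmat M (pt x 0) (Sum.inl i) (Sum.inr j) = 0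

/-- a modulus of continuity -/
def ModCont (ω : ℝ → ℝ) : Prop :=
  Continuous ω ∧ Monotone ω ∧ ω 0 = 0 ∧ ∀ t, 0 ≤ ω t

/-- `L²` norm of `u` on `B_R` -/
def L2n {m n : ℕ} (R : ℝ) (u : Pt m n → ℂ) : ℝ :=
  Real.sqrt (∫ z in ball (0 : Pt m n) R, Complex.normSq (u z))

/-- the perforation `Σ_{ε,N} = {N₃⁻¹ y ⋅ y ≤ ε²}` -/
def SigmaEps {m n : ℕ} (M : Pt m n → Matrix (Idx m n) (Idx m n) ℝ) (ε : ℝ) :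
    Set (Pt m n) :=
  {z | ∑ j, (N3 M z)⁻¹.mulVec (fun k => yp z k) j * yp z j ≤ ε ^ 2}

/-- the boundary `∂Σ_{ε,N} = {N₃⁻¹ y ⋅ y = ε²}` -/
def SigmaEpsBdry {m n : ℕ} (M : Pt m n → Matrix (Idx m n) (Idx m n) ℝ) (ε : ℝ) :
    Set (Pt m n) :=
  {z | ∑ j, (N3 M z)⁻¹.mulVec (fun k => yp z k) j * yp z j = ε ^ 2}


/-- the Hardy constant `c_{n,a,M}` associated with a representation `ā` -/
def hardyC (m n : ℕ) (abar : ES m → ES n → Idx m n → ℝ) (R lam : ℝ) : ℝ :=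
  lam * ((((n : ℝ) - 2) / 2) ^ 2 +
    sInf {t : ℝ | ∃ x : ES m, ‖x‖ < R ∧ t = mu1 n (fun θ => lastE (abar x θ)) 0})

/-! ### Auxiliary lemmas for the proof -/

/-- integral of a directional derivative of a compactly supported smooth function is zero -/
lemma aux_integral_fderiv_eq_zero {E : Type*} [NormedAddCommGroup E] [NormedSpace ℝ E]
    [MeasurableSpace E] [BorelSpace E] [FiniteDimensional ℝ E]
    (μ : Measure E) [μ.IsAddHaarMeasure] (f : E → ℝ) (hf : ContDiff ℝ (⊤ : ℕ∞) f)
    (h'f : HasCompactSupport f) (w : E) : ∫ z, fderiv ℝ f z w ∂μ = 0 := by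
  obtain ⟨K, hK⟩ := ContDiff.lipschitzWith_of_hasCompactSupport h'f hf (by simp)
  have h0 : LipschitzWith 0 (fun _ : E => (1:ℝ)) := LipschitzWith.const _
  have H := LipschitzWith.integral_lineDeriv_mul_eq (μ := μ) h0 hK h'f (-w)
  have hL : ∀ x : E, lineDeriv ℝ (fun _ : E => (1:ℝ)) x (-w) = 0 := by
    intro x; simp [lineDeriv]
  have hR : ∀ x : E, lineDeriv ℝ f x (- -w) = fderiv ℝ f x w := by
    intro x
    rw [neg_neg, DifferentiableAt.lineDeriv_eq_fderiv ((hf.differentiable (by simp)) x)]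
  simp only [hL, hR, zero_mul, mul_one, integral_zero] at H
  exact H.symm

lemma aux_rmap_mul {ι : Type} [Fintype ι] (A B : Matrix ι ι ℝ) (v : ι → ℂ) (i : ι) :
    rmap (A * B) v i = rmap A (rmap B v) i := by
  simp only [rmap, Matrix.mul_apply]
  push_cast
  simp only [Finset.sum_mul, Finset.mul_sum]
  rw [Finset.sum_comm]
  exact Finset.sum_congr rfl fun j _ => Finset.sum_congr rfl fun k _ => by ring

lemma aux_hdot_transpose {ι : Type} [Fintype ι] (A : Matrix ι ι ℝ) (u w : ι → ℂ) :
    hdot (fun i => rmap Aᵀ u i) w = hdot u (fun k => rmap A w k) := by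
  simp only [hdot, rmap, Matrix.transpose_apply, map_sum, _root_.map_mul, Complex.conj_ofReal]
  simp only [Finset.sum_mul, Finset.mul_sum]
  rw [Finset.sum_comm]
  exact Finset.sum_congr rfl fun j _ => Finset.sum_congr rfl fun k _ => by ring

lemma aux_hdot_transpose_mul {ι : Type} [Fintype ι] (Mz : Matrix ι ι ℝ) (w : ι → ℂ) :
    (hdot (fun i => rmap (Mzᵀ * Mz) w i) w).re = hsum (fun k => rmap Mz w k) := by
  have h1 : hdot (fun i => rmap (Mzᵀ * Mz) w i) w
      = hdot (fun k => rmap Mz w k) (fun k => rmap Mz w k) := by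
    have h0 : (fun i => rmap (Mzᵀ * Mz) w i) = fun i => rmap Mzᵀ (rmap Mz w) i := by
      funext i; exact aux_rmap_mul Mzᵀ Mz w i
    rw [h0, aux_hdot_transpose]
  rw [h1]
  simp only [hdot, Complex.mul_conj]
  rw [← Complex.ofReal_sum]
  simp [hsum]


set_option maxHeartbeats 2000000 in
/-- Proposition 2.12, test-function form: Poincaré inequality for the
anisotropic magnetic gradient, with `d = m + n ≥ 3`; the right-hand side is understood in
`[0,∞]`. -/
theorem poincare_inequality_magnetic
    (m n : ℕ) (hn : 2 ≤ n) (hd : 3 ≤ m + n)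
    (R lam Lam Ca Cb c₀ : ℝ)
    (hR : 0 < R) (hlam : 0 < lam) (hlamLam : lam ≤ Lam) (hc₀ : 0 < c₀) :
    ∃ C : ℝ, 0 < C ∧
      ∀ (M : Pt m n → Matrix (Idx m n) (Idx m n) ℝ)
        (a : ES m → ES n → Idx m n → ℝ)
        (b : Pt m n → Idx m n → ℝ)
        (abar : ES m → ES n → Idx m n → ℝ),
        -- M has bounded measurable entries, invertible values; N = MᵀM is elliptic
        (∀ i j, Measurable fun z => M z i j) →
        (∃ CM : ℝ, ∀ z ∈ ball (0 : Pt m n) R, ∀ i j, |M z i j| ≤ CM) →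
        (∀ z ∈ ball (0 : Pt m n) R, (M z).det ≠ 0) →
        (∀ z ∈ ball (0 : Pt m n) R, IsElliptic lam Lam (Nmat M z)) →
        -- ‖a‖_{L^∞} ≤ Ca
        (∀ x : ES m, ‖x‖ < R → ∀ θ : ES n, ‖θ‖ = 1 → ∀ i, |a x θ i| ≤ Ca) →
        -- transversality, the representation ā, and c_{n,a,M} ≥ c₀ > 0
        Transversal M a R →
        (∀ z ∈ ball (0 : Pt m n) R, yp z ≠ 0 →
            (M z)⁻¹.mulVec (fun i => a (xp z) (unitv (yp z)) i) = abar (xp z) (unitv (yp z))) →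
        c₀ ≤ hardyC m n abar R lam →
        -- b ∈ L^d(B_R, ℝ^d) with ‖b‖_{L^d} ≤ Cb
        (∀ i, Measurable fun z => b z i) →
        IntegrableOn (fun z => Real.sqrt (∑ i, (b z i) ^ 2) ^ (m + n : ℝ))
          (ball (0 : Pt m n) R) →
        (∫ z in ball (0 : Pt m n) R, Real.sqrt (∑ i, (b z i) ^ 2) ^ (m + n : ℝ))
          ≤ Cb ^ (m + n : ℝ) →
        -- conclusion: the Poincaré inequality for test functions supported in B_R
        ∀ v : Pt m n → ℂ, ContDiff ℝ (⊤ : ℕ∞) v → HasCompactSupport v →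
          tsupport v ⊆ ball (0 : Pt m n) R →
          (∫⁻ z in ball (0 : Pt m n) R, ENNReal.ofReal (Complex.normSq (v z)))
            ≤ ENNReal.ofReal C *
              ∫⁻ z in ball (0 : Pt m n) R,
                ENNReal.ofReal (hsum fun i => magGrad M (Apot a b) v z i) := by
  classical
  have hRne : R ≠ 0 := ne_of_gt hR
  have hlamne : lam ≠ 0 := ne_of_gt hlam
  refine ⟨4 * R ^ 2 / lam, by positivity, ?_⟩
  intro M a b abar _hMmeas _hMbd hMdet hMell _ha _htrans _hrep _hhardy _hbmeas _hbint
    _hbnorm v hv hcv hsupp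
  -- fixed coordinate direction (in the `y` block)
  have hnpos : 0 < n := by omega
  set i₀ : Idx m n := Sum.inr ⟨0, hnpos⟩ with hi₀def
  set e₀ : Pt m n := EuclideanSpace.single i₀ 1 with he₀def
  set g : Pt m n → ℝ := fun z => Complex.normSq (v z) with hgdef
  set D : Pt m n → ℝ :=
    fun z => 2 * ((v z).re * (grad v z i₀).re + (v z).im * (grad v z i₀).im) with hDdef
  set q : Pt m n → ℝ := fun z => D z ^ 2 / (4 * g z) with hqdef
  -- basic continuity / smoothness
  have hvd : Differentiable ℝ v := hv.differentiable (by simp)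
  have hvcont : Continuous v := hv.continuous
  have hgrad_cont : Continuous fun z => grad v z i₀ := by
    have h1 : Continuous (fderiv ℝ v) := hv.continuous_fderiv (by simp)
    simpa only [grad] using h1.clm_apply (continuous_const (y := EuclideanSpace.single i₀ (1:ℝ)))
  have hre_cont : Continuous fun z => (v z).re := Complex.continuous_re.comp hvcont
  have him_cont : Continuous fun z => (v z).im := Complex.continuous_im.comp hvcont
  have hDcont : Continuous D := by
    apply Continuous.mul continuous_const
    exact (hre_cont.mul (Complex.continuous_re.comp hgrad_cont)).add
      (him_cont.mul (Complex.continuous_im.comp hgrad_cont))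
  have hgcont : Continuous g := Complex.continuous_normSq.comp hvcont
  have hgsm : ContDiff ℝ (⊤ : ℕ∞) g := by
    have h1 : ContDiff ℝ (⊤ : ℕ∞) fun z => (v z).re := Complex.reCLM.contDiff.comp hv
    have h2 : ContDiff ℝ (⊤ : ℕ∞) fun z => (v z).im := Complex.imCLM.contDiff.comp hv
    have h3 := (h1.mul h1).add (h2.mul h2)
    have h4 : g = fun z => (v z).re * (v z).re + (v z).im * (v z).im := by
      funext z; simp [hgdef, Complex.normSq_apply]
    rw [h4]; exact h3
  -- vanishing outside the ball
  have hvz : ∀ z, z ∉ tsupport v → v z = 0 := fun z hz => image_eq_zero_of_notMem_tsupport hz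
  have hD0 : ∀ z, v z = 0 → D z = 0 := by intro z hz; simp [hDdef, hz]
  have hg0 : ∀ z, v z = 0 → g z = 0 := by intro z hz; simp [hgdef, hz]
  -- derivative of g
  have hgfd : ∀ z : Pt m n, ∃ L : Pt m n →L[ℝ] ℝ, HasFDerivAt g L z ∧ L e₀ = D z := by
    intro z
    have hvz' : HasFDerivAt v (fderiv ℝ v z) z := (hvd z).hasFDerivAt
    have hre : HasFDerivAt (fun y => (v y).re) (Complex.reCLM.comp (fderiv ℝ v z)) z :=
      (Complex.reCLM.hasFDerivAt).comp z hvz'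
    have him : HasFDerivAt (fun y => (v y).im) (Complex.imCLM.comp (fderiv ℝ v z)) z :=
      (Complex.imCLM.hasFDerivAt).comp z hvz'
    have h3 := (hre.mul hre).add (him.mul him)
    have h4 : g = fun y => (v y).re * (v y).re + (v y).im * (v y).im := by
      funext y; simp [hgdef, Complex.normSq_apply]
    refine ⟨_, h3.congr_of_eventuallyEq (Filter.EventuallyEq.of_eq h4), ?_⟩
    · simp only [ContinuousLinearMap.add_apply, ContinuousLinearMap.smul_apply,
        ContinuousLinearMap.comp_apply, Complex.reCLM_apply, Complex.imCLM_apply,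
        smul_eq_mul, hDdef]
      have : fderiv ℝ v z e₀ = grad v z i₀ := by rw [he₀def]; rfl
      rw [this]; ring
  -- the auxiliary function  f z = z i₀ * g z
  set f : Pt m n → ℝ := fun z => z i₀ * g z with hfdef
  have hcoord : ContDiff ℝ (⊤ : ℕ∞) fun z : Pt m n => z i₀ :=
    (EuclideanSpace.proj (𝕜 := ℝ) i₀).contDiff
  have hfsm : ContDiff ℝ (⊤ : ℕ∞) f := hcoord.mul hgsm
  have hcf : HasCompactSupport f :=
    HasCompactSupport.intro hcv fun z hz => by simp [hfdef, hg0 z (hvz z hz)]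
  have hffd : ∀ z : Pt m n, fderiv ℝ f z e₀ = g z + z i₀ * D z := by
    intro z
    obtain ⟨L, hL, hLe⟩ := hgfd z
    have hproj : HasFDerivAt (fun y : Pt m n => y i₀) (EuclideanSpace.proj (𝕜 := ℝ) i₀) z :=
      (EuclideanSpace.proj (𝕜 := ℝ) i₀).hasFDerivAt
    have hfz : HasFDerivAt f ((z i₀) • L + g z • (EuclideanSpace.proj (𝕜 := ℝ) i₀)) z :=
      hproj.mul hL
    rw [hfz.fderiv]
    have he₀i : (EuclideanSpace.proj (𝕜 := ℝ) i₀) e₀ = 1 := by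
      show e₀ i₀ = 1
      simp [he₀def, EuclideanSpace.single_apply]
    simp only [ContinuousLinearMap.add_apply, ContinuousLinearMap.smul_apply, smul_eq_mul,
      hLe, he₀i, mul_one]
    ring
  -- integration by parts: ∫ g = -∫ coord * D
  have hIBP : ∫ z : Pt m n, (g z + z i₀ * D z) = 0 := by
    have h := aux_integral_fderiv_eq_zero (volume : Measure (Pt m n)) f hfsm hcf e₀
    rw [show (fun z : Pt m n => fderiv ℝ f z e₀) = fun z => g z + z i₀ * D z from
      funext hffd] at h
    exact h
  -- integrability
  have hcg : HasCompactSupport g :=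
    HasCompactSupport.intro hcv fun z hz => hg0 z (hvz z hz)
  have hgint : Integrable g := hgcont.integrable_of_hasCompactSupport hcg
  have hcoordD_cont : Continuous fun z : Pt m n => z i₀ * D z := hcoord.continuous.mul hDcont
  have hcoordDint : Integrable fun z : Pt m n => z i₀ * D z := by
    apply hcoordD_cont.integrable_of_hasCompactSupport
    exact HasCompactSupport.intro hcv fun z hz => by simp [hD0 z (hvz z hz)]
  have hIG : ∫ z : Pt m n, g z = - ∫ z : Pt m n, z i₀ * D z := by
    have := integral_add hgint hcoordDint
    rw [this] at hIBP; linarith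
  -- restrict to the ball
  have hg_ball : ∀ z, z ∉ ball (0 : Pt m n) R → g z = 0 := fun z hz =>
    hg0 z (hvz z fun h => hz (hsupp h))
  have hD_ball : ∀ z, z ∉ ball (0 : Pt m n) R → D z = 0 := fun z hz =>
    hD0 z (hvz z fun h => hz (hsupp h))
  have hIGball : ∫ z in ball (0 : Pt m n) R, g z = ∫ z : Pt m n, g z :=
    setIntegral_eq_integral_of_forall_compl_eq_zero hg_ball
  -- coordinate bound |z i₀| ≤ ‖z‖
  have habs : ∀ z : Pt m n, |z i₀| ≤ ‖z‖ := by
    intro z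
    rw [EuclideanSpace.norm_eq]
    have h1 : |z i₀| = Real.sqrt (‖z i₀‖ ^ 2) := by
      rw [Real.sqrt_sq (norm_nonneg _), _root_.Real.norm_eq_abs]
    rw [h1]
    apply Real.sqrt_le_sqrt
    exact Finset.single_le_sum (f := fun i => ‖z i‖ ^ 2) (fun i _ => sq_nonneg _)
      (Finset.mem_univ i₀)
  -- ∫_ball g ≤ R * ∫_ball |D|
  have hDabs_int : IntegrableOn (fun z => |D z|) (ball (0 : Pt m n) R) :=
    ((hDcont.integrable_of_hasCompactSupport
      (HasCompactSupport.intro hcv fun z hz => hD0 z (hvz z hz))).norm).integrableOn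
  have step1 : ∫ z in ball (0 : Pt m n) R, g z ≤
      R * ∫ z in ball (0 : Pt m n) R, |D z| := by
    rw [hIGball, hIG]
    have h2 : - ∫ z : Pt m n, z i₀ * D z ≤ ∫ z : Pt m n, |z i₀ * D z| := by
      have := norm_integral_le_integral_norm (μ := (volume : Measure (Pt m n)))
        (f := fun z : Pt m n => z i₀ * D z)
      simp only [Real.norm_eq_abs] at this
      calc - ∫ z : Pt m n, z i₀ * D z ≤ |∫ z : Pt m n, z i₀ * D z| := neg_le_abs _
        _ ≤ ∫ z : Pt m n, |z i₀ * D z| := this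
    refine h2.trans ?_
    have h3 : ∫ z : Pt m n, |z i₀ * D z| = ∫ z in ball (0 : Pt m n) R, |z i₀ * D z| := by
      symm
      exact setIntegral_eq_integral_of_forall_compl_eq_zero fun z hz => by
        simp [hD_ball z hz]
    rw [h3, ← integral_const_mul]
    apply setIntegral_mono_on hcoordDint.norm.integrableOn
      (hDabs_int.const_mul R) measurableSet_ball
    intro z hz
    calc ‖z i₀ * D z‖ = |z i₀| * |D z| := abs_mul _ _
      _ ≤ R * |D z| := mul_le_mul_of_nonneg_right
          ((habs z).trans (mem_ball_zero_iff.mp hz).le) (abs_nonneg _)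
    -- pointwise Cauchy-Schwarz: D² ≤ 4 g |grad|²
  have hDsq : ∀ z, D z ^ 2 ≤ 4 * g z * Complex.normSq (grad v z i₀) := by
    intro z
    simp only [hDdef, hgdef, Complex.normSq_apply]
    nlinarith [sq_nonneg ((v z).re * (grad v z i₀).im - (v z).im * (grad v z i₀).re)]
  have hq_nonneg : ∀ z, 0 ≤ q z := by
    intro z
    simp only [hqdef]
    exact div_nonneg (sq_nonneg _)
      (by nlinarith [Complex.normSq_nonneg (v z)])
  have hqle : ∀ z, q z ≤ Complex.normSq (grad v z i₀) := by
    intro z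
    by_cases hgz : g z = 0
    · have : D z ^ 2 ≤ 0 := by have := hDsq z; rw [hgz] at this; linarith
      have hDz : D z = 0 := by nlinarith [sq_nonneg (D z)]
      simp [hqdef, hDz, Complex.normSq_nonneg]
    · have hgpos : 0 < g z := lt_of_le_of_ne (Complex.normSq_nonneg _) (Ne.symm hgz)
      rw [hqdef]
      rw [div_le_iff₀ (by positivity)]
      calc D z ^ 2 ≤ 4 * g z * Complex.normSq (grad v z i₀) := hDsq z
        _ = Complex.normSq (grad v z i₀) * (4 * g z) := by ring
  -- q is integrable on the ball
  have hq_meas : AEStronglyMeasurable q (volume.restrict (ball (0 : Pt m n) R)) := by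
    apply Measurable.aestronglyMeasurable
    exact ((hDcont.measurable.pow_const 2).div
      ((measurable_const.mul hgcont.measurable)))
  have hnsq_int : IntegrableOn (fun z => Complex.normSq (grad v z i₀))
      (ball (0 : Pt m n) R) := by
    have hcont : Continuous fun z => Complex.normSq (grad v z i₀) :=
      Complex.continuous_normSq.comp hgrad_cont
    exact (hcont.continuousOn.integrableOn_compact (isCompact_closedBall 0 R)).mono_set
      ball_subset_closedBall
  have hqint : IntegrableOn q (ball (0 : Pt m n) R) := by
    apply Integrable.mono' hnsq_int hq_meas
    filter_upwards with z
    rw [_root_.Real.norm_eq_abs, _root_.abs_of_nonneg (hq_nonneg z)]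
    exact hqle z
  -- pointwise AM-GM:  |D| ≤ g/(2R) + 2R q
  have hAMGM : ∀ z, |D z| ≤ (1 / (2 * R)) * g z + (2 * R) * q z := by
    intro z
    by_cases hgz : g z = 0
    · have hvz0 : v z = 0 := by
        have := Complex.normSq_eq_zero.mp hgz
        exact this
      have hDz : D z = 0 := hD0 z hvz0
      simp [hqdef, hDz, hgz]
    · have hgpos : 0 < g z := lt_of_le_of_ne (Complex.normSq_nonneg _) (Ne.symm hgz)
      set u : ℝ := q z with hu
      have hu_nonneg : 0 ≤ u := hq_nonneg z
      have hkey : D z ^ 2 = 4 * g z * u := by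
        rw [hu, hqdef]; field_simp
      have hA_nonneg : 0 ≤ (1 / (2 * R)) * g z + (2 * R) * u := by positivity
      have hsq : |D z| ^ 2 ≤ ((1 / (2 * R)) * g z + (2 * R) * u) ^ 2 := by
        rw [_root_.sq_abs, hkey]
        have h5 : 0 ≤ ((1 / (2 * R)) * g z - (2 * R) * u) ^ 2 := sq_nonneg _
        have hgu : (1 / (2 * R)) * g z * ((2 * R) * u) = g z * u := by
          field_simp
        nlinarith [hgu]
      calc |D z| = Real.sqrt (|D z| ^ 2) := (Real.sqrt_sq (abs_nonneg _)).symm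
        _ ≤ Real.sqrt (((1 / (2 * R)) * g z + (2 * R) * u) ^ 2) := Real.sqrt_le_sqrt hsq
        _ = (1 / (2 * R)) * g z + (2 * R) * u := Real.sqrt_sq hA_nonneg
  -- step 2 : ∫ |D| ≤ (1/2R) ∫ g + 2R ∫ q on the ball
  have step2 : ∫ z in ball (0 : Pt m n) R, |D z| ≤
      (1 / (2 * R)) * (∫ z in ball (0 : Pt m n) R, g z) +
      (2 * R) * (∫ z in ball (0 : Pt m n) R, q z) := by
    rw [← integral_const_mul, ← integral_const_mul, ← integral_add
      ((hgint.integrableOn).const_mul _) (hqint.const_mul _)]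
    apply setIntegral_mono_on hDabs_int
      (((hgint.integrableOn).const_mul _).add (hqint.const_mul _)) measurableSet_ball
    intro z _
    exact hAMGM z
  -- combine : ∫_ball g ≤ 4R² ∫_ball q
  have hIG_nonneg : (0:ℝ) ≤ ∫ z in ball (0 : Pt m n) R, g z :=
    setIntegral_nonneg measurableSet_ball fun z _ => Complex.normSq_nonneg _
  have step3 : ∫ z in ball (0 : Pt m n) R, g z ≤
      4 * R ^ 2 * ∫ z in ball (0 : Pt m n) R, q z := by
    have h1 := step1.trans (by
      have := mul_le_mul_of_nonneg_left step2 hR.le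
      linarith : R * (∫ z in ball (0 : Pt m n) R, |D z|) ≤
        R * ((1 / (2 * R)) * (∫ z in ball (0 : Pt m n) R, g z) +
        (2 * R) * (∫ z in ball (0 : Pt m n) R, q z)))
    have h2 : R * ((1 / (2 * R)) * (∫ z in ball (0 : Pt m n) R, g z) +
        (2 * R) * (∫ z in ball (0 : Pt m n) R, q z)) =
        (1 / 2) * (∫ z in ball (0 : Pt m n) R, g z) +
        2 * R ^ 2 * (∫ z in ball (0 : Pt m n) R, q z) := by
      field_simp
    rw [h2] at h1
    linarith
    -- pointwise diamagnetic-type bound:  lam * q z ≤ |magGrad|² on the ball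
  have hmain : ∀ z ∈ ball (0 : Pt m n) R,
      lam * q z ≤ hsum (fun i => magGrad M (Apot a b) v z i) := by
    intro z hz
    set Mz : Matrix (Idx m n) (Idx m n) ℝ := M z with hMz
    have hdet : IsUnit Mz.det := isUnit_iff_ne_zero.mpr (hMdet z hz)
    set Are : Idx m n → ℝ := fun i => Apot a b z i with hAre
    set B : Idx m n → ℝ := Mz⁻¹.mulVec Are with hB
    have hMB : Mz.mulVec B = Are := by
      rw [hB, Matrix.mulVec_mulVec, Matrix.mul_nonsing_inv _ hdet, Matrix.one_mulVec]
    set w : Idx m n → ℂ := fun j => grad v z j - Complex.I * (B j : ℂ) * v z with hw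
    -- rewrite the magnetic gradient through w
    have h1 : ∀ i, magGrad M (Apot a b) v z i = Complex.I * rmap Mz w i := by
      intro i
      have hsum1 : rmap Mz w i = rmap Mz (grad v z) i - (Complex.I * (Are i : ℂ)) * v z := by
        simp only [rmap, hw, mul_sub, Finset.sum_sub_distrib]
        congr 1
        have : ∑ j, (Mz i j : ℂ) * (Complex.I * (B j : ℂ) * v z)
            = Complex.I * (((∑ j, Mz i j * B j : ℝ) : ℂ)) * v z := by
          push_cast
          simp only [Finset.sum_mul, Finset.mul_sum]
          exact Finset.sum_congr rfl fun j _ => by ring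
        rw [this]
        have h2 : (∑ j, Mz i j * B j) = Are i := by
          have := congrFun hMB i
          simpa [Matrix.mulVec, dotProduct] using this
        rw [h2]
      rw [magGrad, hsum1]
      have : (Complex.I : ℂ) * Complex.I = -1 := Complex.I_mul_I
      push_cast
      ring_nf
      rw [Complex.I_sq]
      ring
    -- |magGrad|² = |Mz w|²
    have h2 : hsum (fun i => magGrad M (Apot a b) v z i) = hsum (fun i => rmap Mz w i) := by
      simp only [hsum, h1, Complex.normSq_mul, Complex.normSq_I, one_mul]
    -- ellipticity
    have h3 : lam * hsum w ≤ hsum (fun i => rmap Mz w i) := by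
      have hell := (hMell z hz w).1
      rwa [show Nmat M z = Mzᵀ * Mz from rfl, aux_hdot_transpose_mul Mz w] at hell
    -- single coordinate bound
    have h4 : Complex.normSq (w i₀) ≤ hsum w :=
      Finset.single_le_sum (f := fun i => Complex.normSq (w i))
        (fun i _ => Complex.normSq_nonneg _) (Finset.mem_univ i₀)
    -- D z = 2 Re(conj (v z) * w i₀)
    have h5 : D z = 2 * ((starRingEnd ℂ) (v z) * w i₀).re := by
      simp only [hDdef, hw, mul_sub, Complex.sub_re]
      have hre1 : ((starRingEnd ℂ) (v z) * grad v z i₀).re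
          = (v z).re * (grad v z i₀).re + (v z).im * (grad v z i₀).im := by
        simp [Complex.mul_re, Complex.conj_re, Complex.conj_im]
        try ring
      have hre2 : ((starRingEnd ℂ) (v z) * (Complex.I * ((B i₀ : ℝ) : ℂ) * v z)).re = 0 := by
        simp [Complex.mul_re, Complex.mul_im, Complex.conj_re, Complex.conj_im,
          Complex.I_re, Complex.I_im, Complex.ofReal_re, Complex.ofReal_im]
        ring
      rw [hre1, hre2]
      ring
    -- D² ≤ 4 g |w i₀|²
    have h6 : D z ^ 2 ≤ 4 * g z * Complex.normSq (w i₀) := by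
      rw [h5]
      have h7 : ((starRingEnd ℂ) (v z) * w i₀).re ^ 2
          ≤ Complex.normSq ((starRingEnd ℂ) (v z) * w i₀) := by
        rw [Complex.normSq_apply]
        nlinarith [sq_nonneg (((starRingEnd ℂ) (v z) * w i₀).im)]
      have h8 : Complex.normSq ((starRingEnd ℂ) (v z) * w i₀)
          = g z * Complex.normSq (w i₀) := by
        rw [Complex.normSq_mul, Complex.normSq_conj]
      nlinarith [h7, h8]
    -- conclude
    have h9 : lam * q z ≤ lam * Complex.normSq (w i₀) := by
      apply mul_le_mul_of_nonneg_left _ hlam.le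
      by_cases hgz : g z = 0
      · have : D z ^ 2 ≤ 0 := by have := h6; rw [hgz] at this; linarith
        have hDz : D z = 0 := by nlinarith [sq_nonneg (D z)]
        simp [hqdef, hDz, Complex.normSq_nonneg]
      · have hgpos : 0 < g z := lt_of_le_of_ne (Complex.normSq_nonneg _) (Ne.symm hgz)
        rw [hqdef, div_le_iff₀ (by positivity)]
        calc D z ^ 2 ≤ 4 * g z * Complex.normSq (w i₀) := h6
          _ = Complex.normSq (w i₀) * (4 * g z) := by ring
    calc lam * q z ≤ lam * Complex.normSq (w i₀) := h9
      _ ≤ lam * hsum w := mul_le_mul_of_nonneg_left h4 hlam.le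
      _ ≤ hsum (fun i => rmap Mz w i) := h3
      _ = hsum (fun i => magGrad M (Apot a b) v z i) := h2.symm
  -- ENNReal endgame
  have hLHS : (∫⁻ z in ball (0 : Pt m n) R, ENNReal.ofReal (Complex.normSq (v z)))
      = ENNReal.ofReal (∫ z in ball (0 : Pt m n) R, g z) := by
    rw [MeasureTheory.ofReal_integral_eq_lintegral_ofReal hgint.integrableOn
      (Filter.Eventually.of_forall fun z => Complex.normSq_nonneg _)]
  have hq_lam_int : IntegrableOn (fun z => lam * q z) (ball (0 : Pt m n) R) :=
    hqint.const_mul _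
  have hRHS1 : ENNReal.ofReal (∫ z in ball (0 : Pt m n) R, lam * q z)
      = ∫⁻ z in ball (0 : Pt m n) R, ENNReal.ofReal (lam * q z) :=
    MeasureTheory.ofReal_integral_eq_lintegral_ofReal hq_lam_int
      (Filter.Eventually.of_forall fun z => mul_nonneg hlam.le (hq_nonneg z))
  have hRHS2 : (∫⁻ z in ball (0 : Pt m n) R, ENNReal.ofReal (lam * q z))
      ≤ ∫⁻ z in ball (0 : Pt m n) R,
        ENNReal.ofReal (hsum fun i => magGrad M (Apot a b) v z i) := by
    apply lintegral_mono_ae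
    filter_upwards [ae_restrict_mem measurableSet_ball] with z hz
    exact ENNReal.ofReal_le_ofReal (hmain z hz)
  rw [hLHS]
  calc ENNReal.ofReal (∫ z in ball (0 : Pt m n) R, g z)
      ≤ ENNReal.ofReal ((4 * R ^ 2 / lam) * ∫ z in ball (0 : Pt m n) R, lam * q z) := by
        apply ENNReal.ofReal_le_ofReal
        rw [integral_const_mul]
        calc ∫ z in ball (0 : Pt m n) R, g z
            ≤ 4 * R ^ 2 * ∫ z in ball (0 : Pt m n) R, q z := step3
          _ = 4 * R ^ 2 / lam * (lam * ∫ z in ball (0 : Pt m n) R, q z) := by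
            field_simp
    _ = ENNReal.ofReal (4 * R ^ 2 / lam) *
        ENNReal.ofReal (∫ z in ball (0 : Pt m n) R, lam * q z) := by
        rw [ENNReal.ofReal_mul (by positivity)]
    _ ≤ ENNReal.ofReal (4 * R ^ 2 / lam) *
        ∫⁻ z in ball (0 : Pt m n) R,
          ENNReal.ofReal (hsum fun i => magGrad M (Apot a b) v z i) := by
        rw [hRHS1]
        exact mul_le_mul_right hRHS2 _


end
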